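/- For a curve f differentiable at x and y with f(x) ≠ f(y) and f(x), f(y) ≠ 0, the quantity ‖f'(x)‖·‖f'(y)‖ / ‖f(x) − f(y)‖² is invariant under inversion on the unit sphere: replacing f by I∘f with I(x) = x/‖x‖² leaves it unchanged. -/

import Mathlib

/-!
Inversion `I = inversion 0 1` is conformal away from `0`: its derivative at `p` is `‖p‖⁻²` times
a reflection, so `‖(I ∘ f)'(x)‖ = ‖f'(x)‖ / ‖f x‖²`. Its chordal distortion is the matching
`‖I p - I q‖ = ‖p - q‖ / (‖p‖ ‖q‖)`, so the factors `‖f x‖⁻² ‖f y‖⁻²` cancel in the ratio.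
-/

open EuclideanGeometry

variable {E : Type*} [NormedAddCommGroup E] [InnerProductSpace ℝ E]

lemma inversion_zero_one_apply (p : E) : inversion (0 : E) 1 p = (‖p‖ ^ 2)⁻¹ • p := by
  simp [inversion_def, dist_eq_norm, inv_pow]

lemma norm_inv_norm_sq_smul_sub_inv_norm_sq_smul {p q : E} (hp : p ≠ 0) (hq : q ≠ 0) :
    ‖(‖p‖ ^ 2)⁻¹ • p - (‖q‖ ^ 2)⁻¹ • q‖ = ‖p - q‖ / (‖p‖ * ‖q‖) := by
  simpa [dist_eq_norm, div_pow, inv_pow, div_eq_inv_mul] using dist_div_norm_sq_smul hp hq 1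

lemma HasDerivAt.inv_norm_sq_smul {f : ℝ → E} {f' : E} {x : ℝ} (hf : HasDerivAt f f' x)
    (hx : f x ≠ 0) :
    HasDerivAt (fun t => (‖f t‖ ^ 2)⁻¹ • f t) ((‖f x‖ ^ 2)⁻¹ • (ℝ ∙ f x)ᗮ.reflection f') x := by
  simpa [Function.comp_def, inversion_zero_one_apply, div_pow, inv_pow] using
    (hasFDerivAt_inversion (R := 1) hx).comp_hasDerivAt x hf

lemma differentiableAt_inv_norm_sq_smul_iff {f : ℝ → E} {x : ℝ} (hx : f x ≠ 0) :
    DifferentiableAt ℝ (fun t => (‖f t‖ ^ 2)⁻¹ • f t) x ↔ DifferentiableAt ℝ f x := by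
  refine ⟨fun hg => ?_, fun hf => (hf.hasDerivAt.inv_norm_sq_smul hx).differentiableAt⟩
  simp_rw [← inversion_zero_one_apply] at hg
  have hgx : inversion (0 : E) 1 (f x) ≠ 0 := by simpa using hx
  simpa [inversion_inversion] using
    (differentiableAt_const (0 : E)).inversion (differentiableAt_const 1) hg hgx

lemma norm_deriv_inv_norm_sq_smul (f : ℝ → E) {x : ℝ} (hx : f x ≠ 0) :
    ‖deriv (fun t => (‖f t‖ ^ 2)⁻¹ • f t) x‖ = ‖deriv f x‖ / ‖f x‖ ^ 2 := by
  by_cases hf : DifferentiableAt ℝ f x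
  · rw [(hf.hasDerivAt.inv_norm_sq_smul hx).deriv, norm_smul, LinearIsometryEquiv.norm_map,
      norm_inv, norm_pow, norm_norm, inv_mul_eq_div]
  · rw [deriv_zero_of_not_differentiableAt hf,
      deriv_zero_of_not_differentiableAt (mt (differentiableAt_inv_norm_sq_smul_iff hx).1 hf)]
    simp

theorem inversion_invariant_density_general (n : ℕ) (f : ℝ → EuclideanSpace ℝ (Fin n)) (x y : ℝ)
    (hx : f x ≠ 0) (hy : f y ≠ 0) :
    ‖deriv (fun t => (‖f t‖ ^ 2)⁻¹ • f t) x‖ * ‖deriv (fun t => (‖f t‖ ^ 2)⁻¹ • f t) y‖ /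
        ‖(‖f x‖ ^ 2)⁻¹ • f x - (‖f y‖ ^ 2)⁻¹ • f y‖ ^ 2 =
      ‖deriv f x‖ * ‖deriv f y‖ / ‖f x - f y‖ ^ 2 := by
  rw [norm_deriv_inv_norm_sq_smul f hx, norm_deriv_inv_norm_sq_smul f hy,
    norm_inv_norm_sq_smul_sub_inv_norm_sq_smul hx hy]
  have hnx : ‖f x‖ ≠ 0 := norm_ne_zero_iff.2 hx
  have hny : ‖f y‖ ≠ 0 := norm_ne_zero_iff.2 hy
  field_simp

/-- The quantity `‖f'(x)‖·‖f'(y)‖ / ‖f(x) − f(y)‖²` is invariant under the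
inversion `I(x) = x/‖x‖²` on the unit sphere. -/
theorem inversion_invariant_density (n : ℕ) (f : ℝ → EuclideanSpace ℝ (Fin n)) (x y : ℝ)
    (hfx : DifferentiableAt ℝ f x) (hfy : DifferentiableAt ℝ f y)
    (hx : f x ≠ 0) (hy : f y ≠ 0) (hxy : f x ≠ f y) :
    ‖deriv (fun t => (‖f t‖ ^ 2)⁻¹ • f t) x‖ * ‖deriv (fun t => (‖f t‖ ^ 2)⁻¹ • f t) y‖ /
        ‖(‖f x‖ ^ 2)⁻¹ • f x - (‖f y‖ ^ 2)⁻¹ • f y‖ ^ 2 =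
      ‖deriv f x‖ * ‖deriv f y‖ / ‖f x - f y‖ ^ 2 :=
  inversion_invariant_density_general n f x y hx hy
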